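/- arXiv:2104.10495 — 5 statements merged into one kernel-verified Lean document; each statement's English description precedes it below -/
import Mathlib

section
/- For any N ≥ 2, the collection of non-empty compact subsets of ℝ^N that are in general position (every set of d+1 pairwise distinct points with d ≤ N is affinely independent) is a dense G_δ subset of the hyperspace K(ℝ^N) with the Hausdorff metric. -/
/-!
The compacta in general position form the complement of the countable union, over `d ≤ N` and
`n : ℕ`, of the sets of compacta containing `d + 1` affinely dependent points at mutual distances
at least `1 / (n + 1)`. Each of these is closed: along a convergent sequence of compacta such
configurations stay in a compact neighbourhood of the limit, and a convergent subsequence yields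
such a configuration in the limit compactum. For density, replace a compactum by a finite `ε`-net
and move its points one at a time, each new point avoiding the finitely many proper affine
subspaces spanned by at most `N` points already placed; a proper affine subspace is closed with
empty interior, so such positions are dense.
-/

open TopologicalSpace Metric Set Filter Topology Finset Module

section GeneralPosition

variable (k : Type*) {V P : Type*} [DivisionRing k] [AddCommGroup V] [Module k V] [AddTorsor V P]

def InGeneralPosition (s : Set P) : Prop :=
  ∀ t : Finset P, ↑t ⊆ s → #t ≤ finrank k V + 1 → AffineIndependent k ((↑) : t → P)

variable {k} {s : Set P}

theorem InGeneralPosition.affineIndependent (h : InGeneralPosition k s) {d : ℕ}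
    (hd : d ≤ finrank k V) {A : Fin (d + 1) → P} (hA : Function.Injective A)
    (hAs : ∀ i, A i ∈ s) : AffineIndependent k A := by
  classical
  have hrange := h (univ.image A) (by simpa [range_subset_iff]) (by
    rw [card_image_of_injective _ hA, card_univ, Fintype.card_fin]; omega)
  refine AffineIndependent.of_set_of_injective ?_ hA
  rwa [← image_univ, ← coe_univ, ← coe_image]

theorem InGeneralPosition.insert (h : InGeneralPosition k s) {y : P}
    (hy : ∀ t : Finset P, ↑t ⊆ s → #t ≤ finrank k V → y ∉ affineSpan k (t : Set P)) :
    InGeneralPosition k (insert y s) := by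
  classical
  intro t hts hcard
  have hsub : ↑(t.erase y) ⊆ s := fun x hx =>
    (hts (mem_of_mem_erase hx)).resolve_left (ne_of_mem_erase hx)
  by_cases hyt : y ∈ t
  · have hcard' : #(t.erase y) ≤ finrank k V := by rw [card_erase_of_mem hyt]; omega
    let i : t := ⟨y, hyt⟩
    let f : {x // x ≠ i} ↪ t.erase y :=
      ⟨fun x => ⟨x.1, mem_erase.2 ⟨fun hx => x.2 (Subtype.ext hx), x.1.2⟩⟩,
        fun a b hab => by ext; simpa using congrArg Subtype.val hab⟩
    refine AffineIndependent.affineIndependent_of_notMem_span (p := ((↑) : t → P)) (i := i)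
      ((h _ hsub (by omega)).comp_embedding f) fun hmem => hy _ hsub hcard' ?_
    refine affineSpan_mono k ?_ hmem
    rintro _ ⟨x, hx, rfl⟩
    exact mem_erase.2 ⟨fun h => hx (Subtype.ext h), x.2⟩
  · rw [erase_eq_of_notMem hyt] at hsub
    exact h t hsub hcard

theorem affineSpan_ne_top_of_card_le_finrank {t : Finset P} (ht : #t ≤ finrank k V) :
    affineSpan k (t : Set P) ≠ ⊤ := by
  classical
  intro h
  obtain rfl | hne := t.eq_empty_or_nonempty
  · simp at h
  have hpos := hne.card_pos
  have hle := finrank_vectorSpan_image_finset_le k (id : P → P) t (n := #t - 1) (by omega)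
  rw [Finset.image_id, ← direction_affineSpan, h, AffineSubspace.direction_top, finrank_top] at hle
  omega

end GeneralPosition

section Hyperspace

variable {α : Type*} [MetricSpace α]

theorem Function.Injective.exists_nat_one_div_le_dist {ι : Type*} [Finite ι] {A : ι → α}
    (hA : Function.Injective A) :
    ∃ n : ℕ, ∀ i j, i ≠ j → 1 / ((n : ℝ) + 1) ≤ dist (A i) (A j) := by
  have h : ∀ i j, ∀ᶠ n : ℕ in atTop, i ≠ j → 1 / ((n : ℝ) + 1) ≤ dist (A i) (A j) := by
    intro i j
    by_cases hij : i = j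
    · simp [hij]
    · exact (tendsto_one_div_add_atTop_nhds_zero_nat.eventually
        (eventually_le_nhds (dist_pos.2 (hA.ne hij)))).mono fun _ h _ => h
  exact (eventually_all.2 fun i => eventually_all.2 (h i)).exists

namespace TopologicalSpace.NonemptyCompacts

theorem infDist_le_dist_of_mem {K L : NonemptyCompacts α} {x : α}
    (hx : x ∈ (K : Set α)) : infDist x L ≤ dist K L := by
  simpa [infDist_zero_of_mem hx, NonemptyCompacts.dist_eq] using
    infDist_le_infDist_add_hausdorffDist (x := x) (edist_ne_top K L)

theorem isClosed_setOf_exists_forall_mem [ProperSpace α] {ι : Type*} [Finite ι]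
    {C : Set (ι → α)} (hC : IsClosed C) :
    IsClosed {K : NonemptyCompacts α | ∃ A ∈ C, ∀ i, A i ∈ (K : Set α)} := by
  refine isSeqClosed_iff_isClosed.1 fun Ks K hKs hlim => ?_
  choose A hAC hAK using hKs
  have hdist := tendsto_iff_dist_tendsto_zero.1 hlim
  have hnear : ∀ᶠ n in atTop, ∀ i, A n i ∈ cthickening 1 (K : Set α) := by
    filter_upwards [hdist.eventually (gt_mem_nhds one_pos)] with n hn i
    refine thickening_subset_cthickening _ _ ((mem_thickening_iff_infDist_lt K.nonempty).2 ?_)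
    exact (infDist_le_dist_of_mem (hAK n i)).trans_lt hn
  obtain ⟨A₀, -, φ, hφ, hAφ⟩ := (isCompact_univ_pi fun _ => K.isCompact.cthickening).tendsto_subseq'
    (x := A) (hnear.mono fun n hn => mem_univ_pi.2 hn).frequently
  refine ⟨A₀, hC.mem_of_tendsto hAφ (Eventually.of_forall fun n => hAC (φ n)), fun i => ?_⟩
  have hzero : infDist (A₀ i) K ≤ 0 :=
    le_of_tendsto_of_tendsto' (((continuous_infDist_pt _).tendsto _).comp (tendsto_pi_nhds.1 hAφ i))
      (hdist.comp hφ.tendsto_atTop) fun n => infDist_le_dist_of_mem (hAK (φ n) i)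
  exact (K.isCompact.isClosed.mem_iff_infDist_zero K.nonempty).2 (hzero.antisymm infDist_nonneg)

end TopologicalSpace.NonemptyCompacts

end Hyperspace

theorem AffineSubspace.dense_compl {V P : Type*} [NormedAddCommGroup V] [NormedSpace ℝ V]
    [MetricSpace P] [NormedAddTorsor V P] {s : AffineSubspace ℝ P} (hs : s ≠ ⊤) :
    Dense (s : Set P)ᶜ := by
  rw [← interior_eq_empty_iff_dense_compl, ← Set.not_nonempty_iff_eq_empty]
  exact fun hint => hs (top_unique ((isOpen_interior.affineSpan_eq_top hint).symm.le.trans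
    (affineSpan_le.2 interior_subset)))

section NormedSpace

variable {E : Type*} [NormedAddCommGroup E] [NormedSpace ℝ E]

theorem isClosed_setOf_separated_not_affineIndependent {ι : Type*} [Finite ι] (r : ℝ) :
    IsClosed {A : ι → E | (∀ i j, i ≠ j → r ≤ dist (A i) (A j)) ∧ ¬AffineIndependent ℝ A} := by
  simp only [ofPred_and, ofPred_forall]
  exact (isClosed_iInter fun i => isClosed_iInter fun j => isClosed_iInter fun _ =>
    isClosed_le continuous_const (by fun_prop)).inter
      isOpen_setOfPred_affineIndependent.isClosed_compl

variable [FiniteDimensional ℝ E]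

theorem TopologicalSpace.NonemptyCompacts.isGδ_setOf_forall_affineIndependent {ι : Type*}
    [Finite ι] :
    IsGδ {K : NonemptyCompacts E | ∀ A : ι → E, Function.Injective A →
      (∀ i, A i ∈ (K : Set E)) → AffineIndependent ℝ A} := by
  convert IsGδ.iInter_of_isOpen fun n : ℕ => (isClosed_setOf_exists_forall_mem
    (isClosed_setOf_separated_not_affineIndependent (ι := ι) (E := E)
      (1 / ((n : ℝ) + 1)))).isOpen_compl using 1
  ext K
  simp only [mem_iInter, mem_compl_iff, mem_ofPred_eq, not_exists, not_and, and_imp]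
  constructor
  · intro hK n A hsep hA hAK
    refine hA (hK A (fun i j hij => by_contra fun hne => ?_) hAK)
    have := hsep i j hne
    rw [hij, dist_self] at this
    exact this.not_gt (by positivity)
  · intro hK A hA hAK
    by_contra hnot
    obtain ⟨n, hn⟩ := hA.exists_nat_one_div_le_dist
    exact hK n A hn hnot hAK

theorem exists_dist_lt_forall_notMem_affineSpan (S : Finset E) (a : E) {δ : ℝ} (hδ : 0 < δ) :
    ∃ y, dist y a < δ ∧
      ∀ t : Finset E, ↑t ⊆ (S : Set E) → #t ≤ finrank ℝ E → y ∉ affineSpan ℝ (t : Set E) := by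
  classical
  let 𝒯 := S.powerset.filter (#· ≤ finrank ℝ E)
  have hdense : Dense (⋂ t ∈ (𝒯 : Set (Finset E)), (affineSpan ℝ (t : Set E) : Set E)ᶜ) :=
    dense_biInter_of_isOpen (fun t _ => (AffineSubspace.closed_of_finiteDimensional _).isOpen_compl)
      𝒯.countable_toSet fun t ht =>
        AffineSubspace.dense_compl (affineSpan_ne_top_of_card_le_finrank (mem_filter.1 ht).2)
  obtain ⟨y, hy, hya⟩ := hdense.exists_mem_open isOpen_ball ⟨a, mem_ball_self hδ⟩
  refine ⟨y, hya, fun t hts hcard => mem_iInter₂.1 hy t ?_⟩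
  exact mem_filter.2 ⟨mem_powerset.2 (coe_subset.1 hts), hcard⟩

theorem exists_finset_inGeneralPosition_near (F : Finset E) {δ : ℝ} (hδ : 0 < δ) :
    ∃ S : Finset E, InGeneralPosition ℝ (S : Set E) ∧
      (∀ x ∈ F, ∃ y ∈ S, dist x y < δ) ∧ ∀ y ∈ S, ∃ x ∈ F, dist y x < δ := by
  classical
  induction F using Finset.induction_on with
  | empty =>
    refine ⟨∅, fun t ht _ => ?_, by simp, by simp⟩
    rw [coe_empty, Set.subset_empty_iff, coe_eq_empty] at ht
    subst ht
    exact affineIndependent_of_subsingleton ℝ _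
  | insert a F _ ih =>
    obtain ⟨S, hS, hFS, hSF⟩ := ih
    obtain ⟨y, hya, hy⟩ := exists_dist_lt_forall_notMem_affineSpan S a hδ
    refine ⟨insert y S, by rw [coe_insert]; exact hS.insert hy, ?_, ?_⟩
    · rw [Finset.forall_mem_insert]
      refine ⟨⟨y, mem_insert_self y S, by rwa [dist_comm]⟩, fun x hx => ?_⟩
      obtain ⟨z, hz, hxz⟩ := hFS x hx
      exact ⟨z, mem_insert_of_mem hz, hxz⟩
    · rw [Finset.forall_mem_insert]
      refine ⟨⟨a, mem_insert_self a F, hya⟩, fun z hz => ?_⟩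
      obtain ⟨x, hx, hzx⟩ := hSF z hz
      exact ⟨x, mem_insert_of_mem hx, hzx⟩

theorem TopologicalSpace.NonemptyCompacts.dense_setOf_inGeneralPosition :
    Dense {K : NonemptyCompacts E | InGeneralPosition ℝ (K : Set E)} := by
  refine Metric.dense_iff.2 fun K ε hε => ?_
  have hε3 : 0 < ε / 3 := by positivity
  obtain ⟨F, hFK, hcover⟩ := K.isCompact.elim_nhds_subcover _ fun x _ => ball_mem_nhds x hε3
  obtain ⟨S, hS, hFS, hSF⟩ := exists_finset_inGeneralPosition_near F hε3
  have hnear : ∀ z ∈ (K : Set E), ∃ y ∈ S, dist z y ≤ 2 * ε / 3 := fun z hz => by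
    obtain ⟨x, hx, hzx⟩ := mem_iUnion₂.1 (hcover hz)
    obtain ⟨y, hy, hxy⟩ := hFS x hx
    exact ⟨y, hy, (dist_triangle z x y).trans (by rw [mem_ball] at hzx; linarith)⟩
  have hSne : (S : Set E).Nonempty :=
    let ⟨z, hz⟩ := K.nonempty
    let ⟨y, hy, _⟩ := hnear z hz
    ⟨y, hy⟩
  refine ⟨⟨⟨S, S.finite_toSet.isCompact⟩, hSne⟩, ?_, hS⟩
  rw [mem_ball, NonemptyCompacts.dist_eq]
  refine (hausdorffDist_le_of_mem_dist (by positivity) (fun y hy => ?_) hnear).trans_lt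
    (by linarith)
  obtain ⟨x, hx, hyx⟩ := hSF y hy
  exact ⟨x, hFK x hx, by linarith⟩

end NormedSpace

theorem stmt6_general (N : ℕ) :
    Dense {K : NonemptyCompacts (EuclideanSpace ℝ (Fin N)) |
      ∀ d : ℕ, d ≤ N → ∀ A : Fin (d + 1) → EuclideanSpace ℝ (Fin N),
        Function.Injective A → (∀ m, A m ∈ (K : Set (EuclideanSpace ℝ (Fin N)))) →
          AffineIndependent ℝ A} ∧
    IsGδ {K : NonemptyCompacts (EuclideanSpace ℝ (Fin N)) |
      ∀ d : ℕ, d ≤ N → ∀ A : Fin (d + 1) → EuclideanSpace ℝ (Fin N),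
        Function.Injective A → (∀ m, A m ∈ (K : Set (EuclideanSpace ℝ (Fin N)))) →
          AffineIndependent ℝ A} := by
  constructor
  · refine NonemptyCompacts.dense_setOf_inGeneralPosition.mono fun K hK d hd A hA hAK =>
      hK.affineIndependent ?_ hA hAK
    rwa [finrank_euclideanSpace_fin]
  · simpa only [ofPred_forall] using IsGδ.iInter fun d => IsGδ.iInter fun _ =>
      NonemptyCompacts.isGδ_setOf_forall_affineIndependent

theorem stmt6 (N : ℕ) (hN : 2 ≤ N) :
    Dense {K : NonemptyCompacts (EuclideanSpace ℝ (Fin N)) |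
      ∀ d : ℕ, d ≤ N → ∀ A : Fin (d + 1) → EuclideanSpace ℝ (Fin N),
        Function.Injective A → (∀ m, A m ∈ (K : Set (EuclideanSpace ℝ (Fin N)))) →
          AffineIndependent ℝ A} ∧
    IsGδ {K : NonemptyCompacts (EuclideanSpace ℝ (Fin N)) |
      ∀ d : ℕ, d ≤ N → ∀ A : Fin (d + 1) → EuclideanSpace ℝ (Fin N),
        Function.Injective A → (∀ m, A m ∈ (K : Set (EuclideanSpace ℝ (Fin N)))) →
          AffineIndependent ℝ A} :=
  stmt6_general N
end

section
/- Let X be a perfect Polish space and R ⊆ X^n a closed nowhere dense relation. Then the set of compact subsets K of X such that every n-tuple of pairwise distinct points of K avoids R is a dense G_δ subset of the hyperspace K(X) with the Vietoris topology. -/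
open TopologicalSpace Metric Set

section aux

variable {X : Type*} [MetricSpace X]

/-- Density of tuples avoiding R, in a product. -/
lemma aux_denseG [CompleteSpace X] {n N : ℕ} {R : Set (Fin n → X)} (hR : Dense Rᶜ)
    (hRo : IsOpen Rᶜ) :
    Dense {y : Fin N → X | ∀ σ : Fin n → Fin N, Function.Injective σ → (y ∘ σ) ∉ R} := by
  have : {y : Fin N → X | ∀ σ : Fin n → Fin N, Function.Injective σ → (y ∘ σ) ∉ R}
      = ⋂ σ : {σ : Fin n → Fin N // Function.Injective σ},
        (fun y : Fin N → X => y ∘ (σ : Fin n → Fin N)) ⁻¹' Rᶜ := by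
    ext y
    simp only [mem_iInter, mem_setOf_eq, mem_preimage, mem_compl_iff, Subtype.forall]
  rw [this]
  apply dense_iInter_of_isOpen
  · intro σ
    exact (hRo.preimage (continuous_pi fun i => continuous_apply (σ.1 i)))
  · rintro ⟨σ, hσ⟩
    rw [Metric.dense_iff]
    intro y r hr
    have hball : (Metric.ball (y ∘ σ) r ∩ Rᶜ).Nonempty :=
      hR.inter_open_nonempty _ isOpen_ball ⟨y ∘ σ, mem_ball_self hr⟩
    obtain ⟨z, hz, hzR⟩ := hball
    classical
    set y' : Fin N → X := Function.extend σ z y with hy'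
    have hcomp : y' ∘ σ = z := by
      funext i
      exact hσ.extend_apply z y i
    refine ⟨y', ?_, ?_⟩
    · rw [mem_ball, dist_pi_lt_iff hr]
      intro j
      by_cases h : ∃ i, σ i = j
      · obtain ⟨i, rfl⟩ := h
        have hj : y' (σ i) = z i := hσ.extend_apply z y i
        rw [hj]
        calc dist (z i) (y (σ i)) = dist (z i) ((y ∘ σ) i) := rfl
          _ ≤ dist z (y ∘ σ) := dist_le_pi_dist _ _ _
          _ < r := hz
      · have hj : y' j = y j := Function.extend_apply' z y j h
        rw [hj, dist_self]; exact hr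
    · show (y' ∘ σ) ∈ Rᶜ
      rw [hcomp]; exact hzR

lemma aux_open {n : ℕ} {R : Set (Fin n → X)} (hclosed : IsClosed R) (ε : ℝ) (hε : 0 < ε) :
    IsOpen {K : NonemptyCompacts X | ∀ A : Fin n → X, A ∈ R → (∀ m, A m ∈ (K : Set X)) →
      ¬ (∀ i j, i ≠ j → ε ≤ dist (A i) (A j))} := by
  rw [Metric.isOpen_iff]
  intro K hK
  set T := R ∩ {A : Fin n → X | ∀ i j, i ≠ j → ε ≤ dist (A i) (A j)} with hT
  have hsepc : IsClosed {A : Fin n → X | ∀ i j, i ≠ j → ε ≤ dist (A i) (A j)} := by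
    have : {A : Fin n → X | ∀ i j, i ≠ j → ε ≤ dist (A i) (A j)}
        = ⋂ i, ⋂ j, ⋂ _h : i ≠ j, {A : Fin n → X | ε ≤ dist (A i) (A j)} := by
      ext A; simp only [mem_setOf_eq, mem_iInter]
    rw [this]
    exact isClosed_iInter fun i => isClosed_iInter fun j => isClosed_iInter fun _ =>
      isClosed_le continuous_const ((continuous_apply i).dist (continuous_apply j))
  have hTclosed : IsClosed T := hclosed.inter hsepc
  have hdisj : (univ.pi fun _ : Fin n => (K : Set X)) ⊆ Tᶜ := by
    intro A hA hAT
    exact hK A hAT.1 (fun m => hA m (mem_univ m)) hAT.2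
  have hcpt : IsCompact (univ.pi fun _ : Fin n => (K : Set X)) :=
    isCompact_univ_pi fun _ => K.isCompact
  obtain ⟨δ, hδ, hsub⟩ := hcpt.exists_thickening_subset_open hTclosed.isOpen_compl hdisj
  refine ⟨δ, hδ, ?_⟩
  intro K' hK'
  rw [mem_ball] at hK'
  intro A hAR hAK hsep
  have hd : hausdorffDist (K' : Set X) (K : Set X) < δ := by
    rwa [← NonemptyCompacts.dist_eq]
  have hedist : EMetric.hausdorffEdist (K' : Set X) (K : Set X) ≠ ⊤ :=
    hausdorffEdist_ne_top_of_nonempty_of_bounded K'.nonempty K.nonempty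
      K'.isCompact.isBounded K.isCompact.isBounded
  choose B hB hBd using fun m => exists_dist_lt_of_hausdorffDist_lt (hAK m) hd hedist
  have hmem : A ∈ thickening δ (univ.pi fun _ : Fin n => (K : Set X)) :=
    mem_thickening_iff.2 ⟨B, fun m _ => hB m, (dist_pi_lt_iff hδ).2 hBd⟩
  exact hsub hmem ⟨hAR, hsep⟩

lemma aux_dense [CompleteSpace X] {n : ℕ} {R : Set (Fin n → X)} (hR : Dense Rᶜ)
    (hRo : IsOpen Rᶜ) :
    Dense {K : NonemptyCompacts X | ∀ A : Fin n → X,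
      (∀ m, A m ∈ (K : Set X)) → Function.Injective A → A ∉ R} := by
  rw [Metric.dense_iff]
  intro K₀ ε hε
  classical
  have hε4 : 0 < ε / 4 := by linarith
  -- finite cover of K₀ by balls with centers in K₀
  obtain ⟨t, ht⟩ := K₀.isCompact.elim_finite_subcover
    (fun z : (K₀ : Set X) => ball (z : X) (ε / 4))
    (fun _ => isOpen_ball) (fun z hz => mem_iUnion.2 ⟨⟨z, hz⟩, mem_ball_self hε4⟩)
  set N := t.card with hN
  set x : Fin N → X := fun j => ((t.equivFin.symm j : (K₀ : Set X)) : X) with hx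
  have hxK : ∀ j, x j ∈ (K₀ : Set X) := fun j => (t.equivFin.symm j : (K₀ : Set X)).2
  have hcover : ∀ z ∈ (K₀ : Set X), ∃ j, dist z (x j) < ε / 4 := by
    intro z hz
    obtain ⟨i, hi, hzi⟩ := mem_iUnion₂.1 (ht hz)
    refine ⟨t.equivFin ⟨i, hi⟩, ?_⟩
    have : x (t.equivFin ⟨i, hi⟩) = (i : X) := by
      simp only [hx, Equiv.symm_apply_apply]
    rw [this]
    exact hzi
  obtain ⟨z₀, hz₀⟩ := K₀.nonempty
  obtain ⟨j₀, -⟩ := hcover z₀ hz₀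
  haveI : Nonempty (Fin N) := ⟨j₀⟩
  obtain ⟨y, hyb, hyG⟩ := Metric.dense_iff.1 (aux_denseG (N := N) hR hRo) x (ε / 4) hε4
  rw [mem_ball] at hyb
  set K : NonemptyCompacts X :=
    ⟨⟨Set.range y, (Set.finite_range y).isCompact⟩, Set.range_nonempty y⟩ with hK
  have hKmem : K ∈ {K : NonemptyCompacts X | ∀ A : Fin n → X,
      (∀ m, A m ∈ (K : Set X)) → Function.Injective A → A ∉ R} := by
    intro A hAmem hAinj hAR
    choose τ hτ using fun m => hAmem m
    have hτinj : Function.Injective τ := by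
      intro a b hab
      apply hAinj
      rw [← hτ a, ← hτ b, hab]
    exact hyG τ hτinj (by rwa [show y ∘ τ = A from funext hτ])
  refine ⟨K, ?_, hKmem⟩
  rw [mem_ball, NonemptyCompacts.dist_eq]
  have hle : hausdorffDist (K : Set X) (K₀ : Set X) ≤ ε / 2 := by
    apply hausdorffDist_le_of_mem_dist (by linarith)
    · rintro a ⟨j, rfl⟩
      refine ⟨x j, hxK j, ?_⟩
      have := dist_le_pi_dist y x j
      linarith
    · intro z hz
      obtain ⟨j, hj⟩ := hcover z hz
      refine ⟨y j, ⟨j, rfl⟩, ?_⟩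
      have h1 := dist_le_pi_dist y x j
      have h2 : dist z (y j) ≤ dist z (x j) + dist (x j) (y j) := dist_triangle _ _ _
      rw [dist_comm (x j) (y j)] at h2
      linarith
  linarith

end aux

theorem stmt8 (X : Type*) [MetricSpace X] [CompleteSpace X] [SecondCountableTopology X]
    (hX : ∀ x : X, Filter.NeBot (nhdsWithin x {x}ᶜ))
    (n : ℕ) (R : Set (Fin n → X)) (hclosed : IsClosed R) (hnwd : IsNowhereDense R) :
    Dense {K : NonemptyCompacts X | ∀ A : Fin n → X,
      (∀ m, A m ∈ (K : Set X)) → Function.Injective A → A ∉ R} ∧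
    IsGδ {K : NonemptyCompacts X | ∀ A : Fin n → X,
      (∀ m, A m ∈ (K : Set X)) → Function.Injective A → A ∉ R} := by
  classical
  have hRdense : Dense Rᶜ := by
    rw [IsNowhereDense, hclosed.closure_eq] at hnwd
    exact interior_eq_empty_iff_dense_compl.1 hnwd
  have hRo : IsOpen Rᶜ := hclosed.isOpen_compl
  refine ⟨aux_dense hRdense hRo, ?_⟩
  have hEq : {K : NonemptyCompacts X | ∀ A : Fin n → X,
      (∀ m, A m ∈ (K : Set X)) → Function.Injective A → A ∉ R}
      = ⋂ k : ℕ, {K : NonemptyCompacts X | ∀ A : Fin n → X, A ∈ R →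
          (∀ m, A m ∈ (K : Set X)) →
          ¬ (∀ i j, i ≠ j → 1 / (k + 1 : ℝ) ≤ dist (A i) (A j))} := by
    ext K
    simp only [mem_setOf_eq, mem_iInter]
    constructor
    · intro hK k A hAR hAK hsep
      have hinj : Function.Injective A := by
        intro a b hab
        by_contra hne
        have h1 := hsep a b hne
        rw [hab, dist_self] at h1
        have h2 : (0 : ℝ) < 1 / (k + 1 : ℝ) := by positivity
        linarith
      exact hK A hAK hinj hAR
    · intro hK A hAK hAinj hAR
      set s := Finset.univ.filter (fun p : Fin n × Fin n => p.1 ≠ p.2) with hs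
      by_cases hsn : s.Nonempty
      · set m := s.inf' hsn (fun p => dist (A p.1) (A p.2)) with hm
        have hmpos : 0 < m := by
          rw [hm, Finset.lt_inf'_iff]
          intro p hp
          have hne : p.1 ≠ p.2 := (Finset.mem_filter.1 hp).2
          exact dist_pos.2 fun h => hne (hAinj h)
        obtain ⟨k, hk⟩ := exists_nat_one_div_lt hmpos
        refine hK k A hAR hAK fun i j hij => ?_
        have hmem : (i, j) ∈ s := Finset.mem_filter.2 ⟨Finset.mem_univ _, hij⟩
        have := Finset.inf'_le (fun p : Fin n × Fin n => dist (A p.1) (A p.2)) hmem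
        have : m ≤ dist (A i) (A j) := this
        linarith
      · refine hK 0 A hAR hAK fun i j hij => absurd ?_ hsn
        exact ⟨(i, j), Finset.mem_filter.2 ⟨Finset.mem_univ _, hij⟩⟩
  rw [hEq]
  exact IsGδ.iInter_of_isOpen fun k => aux_open hclosed _ (by positivity)
end

section
/- Let M ⊆ ℝ^N be a non-empty compact set such that for every admissible array (k; s; i₁,…,i_s) (meaning 0 < k < N, s ≥ 1, all i_j ≥ 2, ∑(i_j−1) ≥ k+1), every tuple of pairwise distinct points (A¹₁,…,A¹_{i₁};…;Aˢ₁,…,Aˢ_{i_s}) in M has difference vectors {Aʲ_m − Aʲ₁} spanning a subspace of dimension at least k+1. Then for every non-zero proper linear subspace H of ℝ^N, the orthogonal projection p_H : ℝ^N → H^⊥ restricted to M has only finitely many non-degenerate fibers. -/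
/-!
If there were infinitely many non-degenerate fibers, pick `k + 1` of them, where `k = dim H`, and
two distinct points in each. Distinct fibers are disjoint, so these `2(k + 1)` points are pairwise
distinct, and the hypothesis with `s = k + 1`, `i₁ = ⋯ = i_s = 2` says that their differences
within a fiber span a space of dimension at least `k + 1`. But two points in one fiber have the
same projection onto `Hᗮ`, so their difference lies in `H`, a space of dimension `k`.
-/

noncomputable def projFiber {N : ℕ} (H : Submodule ℝ (EuclideanSpace ℝ (Fin N)))
    (M : Set (EuclideanSpace ℝ (Fin N))) (A : EuclideanSpace ℝ (Fin N)) :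
    Set (EuclideanSpace ℝ (Fin N)) :=
  {B ∈ M | Hᗮ.orthogonalProjectionOnto B = Hᗮ.orthogonalProjectionOnto A}

theorem Set.Infinite.exists_injective_pairs_of_pairwiseDisjoint {α : Type*} {S : Set (Set α)}
    (hS : S.Infinite) (hdisj : S.PairwiseDisjoint id) (hnt : ∀ F ∈ S, F.Nontrivial) (n : ℕ) :
    ∃ (F : Fin n → Set α) (P : Fin n → Fin 2 → α), (∀ j, F j ∈ S) ∧ (∀ j m, P j m ∈ F j) ∧
      Function.Injective (fun p : Σ _ : Fin n, Fin 2 => P p.1 p.2) := by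
  let F : Fin n → Set α := fun j => hS.natEmbedding _ j
  have hFS : ∀ j, F j ∈ S := fun j => (hS.natEmbedding _ j).2
  have hFinj : Function.Injective F :=
    fun a b hab => Fin.val_injective ((hS.natEmbedding _).injective (Subtype.ext hab))
  choose x hx y hy hxy using fun j => hnt (F j) (hFS j)
  have hmem : ∀ j m, ![x j, y j] m ∈ F j := fun j m => by fin_cases m <;> simp [hx, hy]
  refine ⟨F, fun j => ![x j, y j], hFS, hmem, ?_⟩
  rintro ⟨j, m⟩ ⟨j', m'⟩ h
  obtain rfl : j = j' := by
    by_contra hne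
    refine Set.disjoint_left.mp (hdisj (hFS j) (hFS j') (hFinj.ne hne)) (hmem j m) ?_
    exact (congrArg (· ∈ F j') h).mpr (hmem j' m')
  have hyx : y j ≠ x j := (hxy j).symm
  fin_cases m <;> fin_cases m' <;> simp_all

section projFiber

variable {N : ℕ} {H : Submodule ℝ (EuclideanSpace ℝ (Fin N))} {M : Set (EuclideanSpace ℝ (Fin N))}
  {A B C : EuclideanSpace ℝ (Fin N)}

theorem projFiber_eq_of_mem (hB : B ∈ projFiber H M A) : projFiber H M B = projFiber H M A := by
  ext C
  simp only [projFiber, Set.mem_sep_iff] at hB ⊢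
  rw [hB.2]

theorem sub_mem_of_mem_projFiber (hB : B ∈ projFiber H M A) (hC : C ∈ projFiber H M A) :
    B - C ∈ H := by
  rw [← Submodule.orthogonal_orthogonal H, ← Submodule.orthogonalProjectionOnto_eq_zero_iff,
    map_sub, hB.2, hC.2, sub_self]

theorem pairwiseDisjoint_projFiber (S : Set (Set (EuclideanSpace ℝ (Fin N))))
    (hS : S ⊆ Set.range (projFiber H M)) : S.PairwiseDisjoint id := by
  rintro _ hF _ hG hFG
  obtain ⟨A, rfl⟩ := hS hF
  obtain ⟨B, rfl⟩ := hS hG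
  refine Set.disjoint_left.mpr fun C hCA hCB => hFG ?_
  rw [← projFiber_eq_of_mem hCA, projFiber_eq_of_mem hCB]

end projFiber

theorem stmt10 (N : ℕ) (M : Set (EuclideanSpace ℝ (Fin N)))
    (hyp : ∀ (k s : ℕ) (i : Fin s → ℕ), ∀ (_ : 0 < k) (_ : k < N) (_ : 1 ≤ s) (hi : ∀ j, 2 ≤ i j) (_ : k + 1 ≤ ∑ j, (i j - 1)),
      ∀ A : (j : Fin s) → Fin (i j) → EuclideanSpace ℝ (Fin N),
        (∀ j m, A j m ∈ M) →
        Function.Injective (fun p : Σ j : Fin s, Fin (i j) => A p.1 p.2) →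
        k + 1 ≤ Module.finrank ℝ (Submodule.span ℝ
          {v | ∃ (j : Fin s) (m : Fin (i j)), m ≠ (⟨0, by have := hi j; omega⟩ : Fin (i j)) ∧
            v = A j m - A j ⟨0, by have := hi j; omega⟩})) :
    ∀ H : Submodule ℝ (EuclideanSpace ℝ (Fin N)), H ≠ ⊥ → H ≠ ⊤ →
      {F : Set (EuclideanSpace ℝ (Fin N)) | ∃ A ∈ M, F = projFiber H M A ∧ F.Nontrivial}.Finite := by
  intro H hbot htop
  by_contra! hinf
  let k := Module.finrank ℝ H
  have hk0 : 0 < k := Module.finrank_pos_iff.mpr (Submodule.nontrivial_iff_ne_bot.mpr hbot)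
  have hkN : k < N := by simpa using Submodule.finrank_lt htop
  obtain ⟨F, P, hFS, hPF, hPinj⟩ := hinf.exists_injective_pairs_of_pairwiseDisjoint
    (pairwiseDisjoint_projFiber _ fun _ ⟨A, _, hF, _⟩ => ⟨A, hF.symm⟩) (fun _ ⟨_, _, _, hF⟩ => hF) (k + 1)
  have hPM : ∀ j m, P j m ∈ M := fun j m => by
    obtain ⟨A, -, hF, -⟩ := hFS j
    exact (hF ▸ hPF j m).1
  have hspan := hyp k (k + 1) (fun _ => 2) hk0 hkN (by omega) (fun _ => le_refl 2) (by simp) P hPM hPinj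
  have hle : Submodule.span ℝ {v | ∃ (j : Fin (k + 1)) (m : Fin 2), m ≠ 0 ∧ v = P j m - P j 0} ≤ H := by
    refine Submodule.span_le.mpr ?_
    rintro v ⟨j, m, -, rfl⟩
    obtain ⟨A, -, hF, -⟩ := hFS j
    exact sub_mem_of_mem_projFiber (hF ▸ hPF j m) (hF ▸ hPF j 0)
  have := hspan.trans (Submodule.finrank_mono hle)
  omega
end

section
/- Let N ≥ 2 and let M ⊆ ℝ^N be a Cantor set in general position with respect to all orthogonal projections. Then for every non-zero proper linear subspace H ⊆ ℝ^N, the image p_H(M) under the orthogonal projection onto H^⊥ is a Cantor set. -/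
def GenPosWrt {N : ℕ} (k : ℕ) (H : Submodule ℝ (EuclideanSpace ℝ (Fin N)))
    (M : Set (EuclideanSpace ℝ (Fin N))) : Prop :=
  {F : Set (EuclideanSpace ℝ (Fin N)) | ∃ A ∈ M, F = projFiber H M A ∧ F.Nontrivial}.Finite ∧
  (∀ A ∈ M, (projFiber H M A).Nontrivial →
    (projFiber H M A).ncard ≤ k + 1 ∧
    AffineIndependent ℝ ((↑) : projFiber H M A → EuclideanSpace ℝ (Fin N))) ∧
  (∀ 𝒮 : Finset (Set (EuclideanSpace ℝ (Fin N))),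
    (∀ F ∈ 𝒮, ∃ A ∈ M, F = projFiber H M A ∧ F.Nontrivial) →
    ∑ F ∈ 𝒮, (F.ncard - 1) ≤ k)

open Set Topology

section Topology

variable {X Y : Type*} [TopologicalSpace X] [TopologicalSpace Y]

theorem Preperfect.image_of_finite_fibers [T1Space X] {f : X → Y} (hf : Continuous f)
    {M : Set X} (hM : Preperfect M) (hfib : ∀ a ∈ M, (M ∩ f ⁻¹' {f a}).Finite) :
    Preperfect (f '' M) := by
  rw [preperfect_iff_nhds]
  rintro _ ⟨a, ha, rfl⟩ U hU
  set F := (M ∩ f ⁻¹' {f a}) \ {a}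
  have hW : f ⁻¹' U ∩ Fᶜ ∈ 𝓝 a :=
    Filter.inter_mem (hf.continuousAt.preimage_mem_nhds hU)
      (((hfib a ha).sdiff).isClosed.isOpen_compl.mem_nhds fun h => h.2 rfl)
  obtain ⟨b, ⟨⟨hbU, hbF⟩, hbM⟩, hba⟩ := (preperfect_iff_nhds.mp hM) a ha _ hW
  exact ⟨f b, ⟨hbU, b, hbM, rfl⟩, fun hfb => hbF ⟨⟨hbM, hfb⟩, hba⟩⟩

theorem exists_isClopen_mem_iff_of_finite [CompactSpace X] [T2Space X]
    [TotallyDisconnectedSpace X] {T : Set X} (hT : T.Finite) (P : Set X) :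
    ∃ V, IsClopen V ∧ ∀ t ∈ T, t ∈ V ↔ t ∈ P := by
  obtain ⟨V, hV, hPV, hVP⟩ := exists_clopen_of_closed_subset_open
    (hT.inter_of_left P).isClosed (hT.sdiff (t := P)).isClosed.isOpen_compl
    (fun t ht htT => htT.2 ht.2)
  exact ⟨V, hV, fun t ht => ⟨fun htV => by_contra fun htP => hVP htV ⟨ht, htP⟩,
    fun htP => hPV ⟨ht, htP⟩⟩⟩

theorem isTotallySeparated_range_of_finite_nonInjective [CompactSpace X] [T2Space X]
    [TotallyDisconnectedSpace X] [T2Space Y] {f : X → Y} (hf : Continuous f)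
    (hD : {a | ∃ b, a ≠ b ∧ f a = f b}.Finite) :
    IsTotallySeparated (range f) := by
  rintro _ ⟨a, rfl⟩ _ ⟨b, rfl⟩ hab
  set T := insert a (insert b {c | ∃ d, c ≠ d ∧ f c = f d})
  have hDT : ∀ c d, c ≠ d → f c = f d → c ∈ T :=
    fun c d hne hcd => mem_insert_of_mem _ (mem_insert_of_mem _ ⟨d, hne, hcd⟩)
  obtain ⟨V, hV, hVT⟩ :=
    exists_isClopen_mem_iff_of_finite ((hD.insert b).insert a) {t | f t ≠ f b}
  have haV : a ∈ V := (hVT a (mem_insert _ _)).mpr hab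
  have hbV : b ∉ V := fun h => (hVT b (mem_insert_of_mem _ (mem_insert _ _))).mp h rfl
  have hsat : ∀ c d, f c = f d → c ∈ V → d ∈ V := by
    intro c d hcd hc
    obtain rfl | hne := eq_or_ne c d
    · exact hc
    have hc' : f c ≠ f b := (hVT c (hDT c d hne hcd)).mp hc
    exact (hVT d (hDT d c hne.symm hcd.symm)).mpr (show f d ≠ f b from hcd ▸ hc')
  have hdisj : Disjoint (f '' V) (f '' Vᶜ) := by
    rw [disjoint_left]
    rintro _ ⟨c, hc, rfl⟩ ⟨d, hd, hdc⟩
    exact hd (hsat c d hdc.symm hc)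
  obtain ⟨u, v, hu, hv, hVu, hVv, huv⟩ := SeparatedNhds.of_isCompact_isCompact
    (hV.isClosed.isCompact.image hf) (hV.compl.isClosed.isCompact.image hf) hdisj
  refine ⟨u, v, hu, hv, hVu ⟨a, haV, rfl⟩, hVv ⟨b, hbV, rfl⟩, ?_, huv⟩
  rintro _ ⟨c, rfl⟩
  by_cases hc : c ∈ V
  · exact Or.inl (hVu ⟨c, hc, rfl⟩)
  · exact Or.inr (hVv ⟨c, hc, rfl⟩)

theorem IsTotallyDisconnected.image_of_finite_nonInjective [T2Space X] [T2Space Y] {f : X → Y}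
    (hf : Continuous f) {M : Set X} (hMc : IsCompact M) (hMtd : IsTotallyDisconnected M)
    (hD : {a ∈ M | ∃ b ∈ M, a ≠ b ∧ f a = f b}.Finite) :
    IsTotallyDisconnected (f '' M) := by
  have : CompactSpace M := isCompact_iff_compactSpace.mp hMc
  have : TotallyDisconnectedSpace M := totallyDisconnectedSpace_subtype_iff.mpr hMtd
  have hD' : {a : M | ∃ b : M, a ≠ b ∧ f a = f b}.Finite := by
    refine (hD.preimage Subtype.val_injective.injOn).subset ?_
    rintro ⟨a, ha⟩ ⟨⟨b, hb⟩, hne, heq⟩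
    exact ⟨ha, b, hb, fun h => hne (Subtype.ext h), heq⟩
  rw [image_eq_range]
  exact isTotallyDisconnected_of_isTotallySeparated
    (isTotallySeparated_range_of_finite_nonInjective (hf.comp continuous_subtype_val) hD')

end Topology

theorem GenPosWrt.finite_nonInjective {N k : ℕ} {H : Submodule ℝ (EuclideanSpace ℝ (Fin N))}
    {M : Set (EuclideanSpace ℝ (Fin N))} (hGP : GenPosWrt k H M) :
    {a ∈ M | ∃ b ∈ M, a ≠ b ∧
      Hᗮ.orthogonalProjectionOnto a = Hᗮ.orthogonalProjectionOnto b}.Finite := by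
  obtain ⟨hfin, hindep, -⟩ := hGP
  refine (hfin.sUnion ?_).subset ?_
  · rintro _ ⟨A, hA, rfl, hnt⟩
    exact finite_set_of_fin_dim_affineIndependent ℝ (hindep A hA hnt).2
  · rintro a ⟨ha, b, hb, hne, heq⟩
    exact ⟨projFiber H M a, ⟨a, ha, rfl, a, ⟨ha, rfl⟩, b, ⟨hb, heq.symm⟩, hne⟩, ha, rfl⟩

theorem stmt16_general (N : ℕ) (M : Set (EuclideanSpace ℝ (Fin N)))
    (hMne : M.Nonempty) (hMc : IsCompact M) (hMp : Perfect M)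
    (hMtd : IsTotallyDisconnected M)
    (hGP : ∀ H : Submodule ℝ (EuclideanSpace ℝ (Fin N)), H ≠ ⊥ → H ≠ ⊤ →
      GenPosWrt (Module.finrank ℝ H) H M) :
    ∀ H : Submodule ℝ (EuclideanSpace ℝ (Fin N)), H ≠ ⊥ → H ≠ ⊤ →
      ((Hᗮ.orthogonalProjectionOnto '' M : Set Hᗮ).Nonempty ∧
       IsCompact (Hᗮ.orthogonalProjectionOnto '' M : Set Hᗮ) ∧
       Perfect (Hᗮ.orthogonalProjectionOnto '' M : Set Hᗮ) ∧
       IsTotallyDisconnected (Hᗮ.orthogonalProjectionOnto '' M : Set Hᗮ)) := by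
  intro H hb ht
  set p := Hᗮ.orthogonalProjectionOnto
  have hD := (hGP H hb ht).finite_nonInjective
  have hfib : ∀ a ∈ M, (M ∩ p ⁻¹' {p a}).Finite := fun a ha =>
    (hD.insert a).subset fun c ⟨hc, hca⟩ =>
      (eq_or_ne c a).imp id fun hne => ⟨hc, a, ha, hne, hca⟩
  have hcompact : IsCompact (p '' M) := hMc.image p.continuous
  exact ⟨hMne.image p, hcompact,
    ⟨hcompact.isClosed, hMp.acc.image_of_finite_fibers p.continuous hfib⟩,
    hMtd.image_of_finite_nonInjective p.continuous hMc hD⟩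

theorem stmt16 (N : ℕ) (hN : 2 ≤ N) (M : Set (EuclideanSpace ℝ (Fin N)))
    (hMne : M.Nonempty) (hMc : IsCompact M) (hMp : Perfect M)
    (hMtd : IsTotallyDisconnected M)
    (hGP : ∀ H : Submodule ℝ (EuclideanSpace ℝ (Fin N)), H ≠ ⊥ → H ≠ ⊤ →
      GenPosWrt (Module.finrank ℝ H) H M) :
    ∀ H : Submodule ℝ (EuclideanSpace ℝ (Fin N)), H ≠ ⊥ → H ≠ ⊤ →
      ((Hᗮ.orthogonalProjectionOnto '' M : Set Hᗮ).Nonempty ∧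
       IsCompact (Hᗮ.orthogonalProjectionOnto '' M : Set Hᗮ) ∧
       Perfect (Hᗮ.orthogonalProjectionOnto '' M : Set Hᗮ) ∧
       IsTotallyDisconnected (Hᗮ.orthogonalProjectionOnto '' M : Set Hᗮ)) :=
  stmt16_general N M hMne hMc hMp hMtd hGP
end

section
/- Let K be a Cantor set and f : K → Y a continuous surjection onto a metric space Y such that all but finitely many fibers of f are singletons and every fiber is finite. Then Y is a Cantor set. -/
open Set Function Topology

/-!
An isolated point of `Y` would have an open, finite, nonempty fiber, which cannot exist in the
perfect space `X`; so `Y` is perfect. If a connected `C ⊆ Y` had two points, it would be infinite,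
so it would contain a point `y₀ = f x₀` with singleton fiber. Choosing a clopen `V ∋ x₀` that avoids
the finitely many nontrivial fibers and the fiber of a second point `b ∈ C`, the set `V` is
saturated, so `f '' V` is clopen (`f` is a quotient map), contains `y₀` but not `b`, and separates `C`.
-/

theorem preimage_image_eq_of_disjoint_nontrivial_fibers {X Y : Type*} {f : X → Y} {V : Set X}
    (hV : Disjoint V (f ⁻¹' {y | (f ⁻¹' {y}).Nontrivial})) : f ⁻¹' (f '' V) = V := by
  refine Subset.antisymm (fun x ⟨x', hx'V, hfx'⟩ => ?_) (subset_preimage_image f V)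
  by_contra hxV
  have hne : x' ≠ x := fun h => hxV (h ▸ hx'V)
  exact hV.notMem_of_mem_left hx'V ⟨x', rfl, x, hfx'.symm, hne⟩

section

variable {X Y : Type*} [TopologicalSpace X] [TopologicalSpace Y]

theorem not_isOpen_of_finite_of_nonempty [T0Space X] [PerfectSpace X] {s : Set X}
    (hs : s.Finite) (hne : s.Nonempty) : ¬IsOpen s := fun ho =>
  let ⟨x, _, hx⟩ := exists_isOpen_singleton_of_isOpen_finite hs hne ho
  not_isOpen_singleton x hx

theorem PerfectSpace.of_continuous_surjective_finite_fibers [T0Space X] [PerfectSpace X]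
    {f : X → Y} (hf : Continuous f) (hsurj : Surjective f) (hfin : ∀ y, (f ⁻¹' {y}).Finite) :
    PerfectSpace Y := by
  refine perfectSpace_iff_forall_not_isolated.2 fun y => ⟨fun hy => ?_⟩
  have hopen : IsOpen (f ⁻¹' {y}) :=
    ((isOpen_singleton_iff_punctured_nhds y).2 hy).preimage hf
  exact not_isOpen_of_finite_of_nonempty (hfin y) (hsurj y) hopen

theorem TotallyDisconnectedSpace.of_continuous_surjective_finite_nontrivial_fibers
    [CompactSpace X] [T2Space X] [TotallyDisconnectedSpace X] [T2Space Y]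
    {f : X → Y} (hf : Continuous f) (hsurj : Surjective f)
    (hsing : {y | (f ⁻¹' {y}).Nontrivial}.Finite) : TotallyDisconnectedSpace Y := by
  refine ⟨fun C _ hC => not_nontrivial_iff.1 fun hCnt => ?_⟩
  obtain ⟨y₀, hy₀C, hy₀F⟩ := ((hC.infinite_of_nontrivial hCnt).sdiff hsing).nonempty
  obtain ⟨b, hbC, hby₀⟩ := hCnt.exists_ne y₀
  obtain ⟨x₀, rfl⟩ := hsurj y₀
  have hO : IsOpen (f ⁻¹' (insert b {y | (f ⁻¹' {y}).Nontrivial})ᶜ) :=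
    (hsing.insert b).isClosed.isOpen_compl.preimage hf
  obtain ⟨V, hVclopen, hx₀V, hVO⟩ :=
    compact_exists_isClopen_in_isOpen hO (x := x₀) fun h => h.elim (hby₀ ·.symm) hy₀F
  have hsat : f ⁻¹' (f '' V) = V := preimage_image_eq_of_disjoint_nontrivial_fibers <|
    disjoint_left.2 fun x hxV hxF => hVO hxV (.inr hxF)
  have himage : IsClopen (f '' V) :=
    (IsQuotientMap.of_surjective_continuous hsurj hf).isClopen_preimage.1 (by rwa [hsat])
  have hb : b ∉ f '' V := fun ⟨x, hxV, hfx⟩ => hVO hxV (.inl hfx)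
  exact hb (hC.subset_isClopen himage ⟨f x₀, hy₀C, mem_image_of_mem f hx₀V⟩ hbC)

end

theorem stmt17 (X Y : Type*) [MetricSpace X] [CompactSpace X] [Nonempty X]
    (hXp : Perfect (Set.univ : Set X)) (hXtd : IsTotallyDisconnected (Set.univ : Set X))
    [MetricSpace Y]
    (f : X → Y) (hf : Continuous f) (hsurj : Function.Surjective f)
    (hfin : ∀ y : Y, (f ⁻¹' {y}).Finite)
    (hsing : {y : Y | (f ⁻¹' {y}).Nontrivial}.Finite) :
    Nonempty Y ∧ CompactSpace Y ∧ Perfect (Set.univ : Set Y) ∧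
      IsTotallyDisconnected (Set.univ : Set Y) := by
  have : PerfectSpace X := ⟨hXp.2⟩
  have : TotallyDisconnectedSpace X := ⟨hXtd⟩
  exact ⟨‹Nonempty X›.map f, hsurj.compactSpace hf,
    ⟨isClosed_univ, (PerfectSpace.of_continuous_surjective_finite_fibers hf hsurj hfin).1⟩,
    (TotallyDisconnectedSpace.of_continuous_surjective_finite_nontrivial_fibers hf hsurj hsing).1⟩
end
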